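/- (S_n-Conjugation Lemma) Let n ≥ 5 and let g ∈ ni(A_n, C_{3^r}) have the form g = ((h, h^{-1}) repeated u times, g') for some u ≥ 1, where h = (i j k) is a 3-cycle and neither j nor k lies in the support of any entry of the tuple g'. Then for every γ in the symmetric group S_n, the tuple g is braid equivalent to its entrywise conjugate γ g γ^{-1} = (γ g_1 γ^{-1},…, γ g_r γ^{-1}). -/

import Mathlib

/-- Elementary braid move: replace adjacent entries `(a, b)` by `(a * b * a⁻¹, a)`. -/
def BraidMove {G : Type*} [Group G] (x y : List G) : Prop :=
  ∃ (l₁ l₂ : List G) (a b : G),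
    x = l₁ ++ a :: b :: l₂ ∧ y = l₁ ++ (a * b * a⁻¹) :: a :: l₂

/-- Braid equivalence: the equivalence relation generated by elementary braid moves. -/
def BraidEquiv {G : Type*} [Group G] : List G → List G → Prop :=
  Relation.EqvGen BraidMove

/-- The Nielsen class `ni(A_n, C_{3^r})`: `r`-tuples of 3-cycles in the alternating
group `A_n` with product 1 whose entries generate `A_n`. -/
def NielsenA (n r : ℕ) (l : List (Equiv.Perm (Fin n))) : Prop :=
  l.length = r ∧ (∀ σ ∈ l, σ.IsThreeCycle) ∧ l.prod = 1 ∧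
    Subgroup.closure {σ | σ ∈ l} = alternatingGroup (Fin n)

/-!
For a tuple with product one, conjugation by any entry `a` is realised by braids: pull `a` to
the front; the remaining entries have product `a⁻¹`, and the full twist of a tuple conjugates it
by its product. The elements whose conjugation is realised by braids form a subgroup, which
therefore contains the group generated by the entries, here `A_n`. The transposition `(j k)`
inverts `h` and commutes with every entry of `g'`, so it turns each pair `(h, h⁻¹)` into
`(h⁻¹, h)`, a single braid move; being odd, it generates `S_n` together with `A_n`.
-/

section BraidEquiv

variable {G : Type*} [Group G] {l m l' m' : List G}

theorem BraidEquiv.refl (l : List G) : BraidEquiv l l := Relation.EqvGen.refl l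

theorem BraidEquiv.symm (h : BraidEquiv l m) : BraidEquiv m l := Relation.EqvGen.symm _ _ h

theorem BraidEquiv.trans {n : List G} (h₁ : BraidEquiv l m) (h₂ : BraidEquiv m n) :
    BraidEquiv l n :=
  Relation.EqvGen.trans _ _ _ h₁ h₂

instance : Trans (@BraidEquiv G _) (@BraidEquiv G _) (@BraidEquiv G _) := ⟨BraidEquiv.trans⟩

theorem BraidMove.braidEquiv (h : BraidMove l m) : BraidEquiv l m := Relation.EqvGen.rel _ _ h

theorem BraidEquiv.of_eq (h : l = m) : BraidEquiv l m := h ▸ BraidEquiv.refl l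

theorem BraidEquiv.map_of_braidMove {f : List G → List G}
    (hf : ∀ l m, BraidMove l m → BraidMove (f l) (f m)) (h : BraidEquiv l m) :
    BraidEquiv (f l) (f m) := by
  induction h with
  | rel _ _ h => exact (hf _ _ h).braidEquiv
  | refl => exact .refl _
  | symm _ _ _ ih => exact ih.symm
  | trans _ _ _ _ _ ih₁ ih₂ => exact ih₁.trans ih₂

theorem BraidEquiv.append (h : BraidEquiv l l') (h' : BraidEquiv m m') :
    BraidEquiv (l ++ m) (l' ++ m') := by
  have left : BraidEquiv (l ++ m) (l' ++ m) := h.map_of_braidMove (f := (· ++ m))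
    fun _ _ ⟨l₁, l₂, a, b, hx, hy⟩ => ⟨l₁, l₂ ++ m, a, b, by simp [hx], by simp [hy]⟩
  have right : BraidEquiv (l' ++ m) (l' ++ m') := h'.map_of_braidMove (f := (l' ++ ·))
    fun _ _ ⟨l₁, l₂, a, b, hx, hy⟩ => ⟨l' ++ l₁, l₂, a, b, by simp [hx], by simp [hy]⟩
  exact left.trans right

theorem BraidEquiv.cons (a : G) (h : BraidEquiv l m) : BraidEquiv (a :: l) (a :: m) :=
  (BraidEquiv.refl [a]).append h

theorem BraidEquiv.flatten_replicate (u : ℕ) (h : BraidEquiv l m) :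
    BraidEquiv (List.replicate u l).flatten (List.replicate u m).flatten := by
  induction u with
  | zero => exact .refl _
  | succ u ih => simpa only [List.replicate_succ, List.flatten_cons] using h.append ih

theorem BraidEquiv.map_conj (c : G) (h : BraidEquiv l m) :
    BraidEquiv (l.map (fun x => c * x * c⁻¹)) (m.map (fun x => c * x * c⁻¹)) :=
  h.map_of_braidMove (f := List.map (fun x => c * x * c⁻¹)) fun _ _ ⟨l₁, l₂, a, b, hx, hy⟩ =>
    ⟨l₁.map (fun x => c * x * c⁻¹), l₂.map (fun x => c * x * c⁻¹), c * a * c⁻¹, c * b * c⁻¹,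
      by simp [hx], by simp [hy, mul_assoc]⟩

theorem BraidEquiv.prod_eq (h : BraidEquiv l m) : l.prod = m.prod := by
  induction h with
  | rel _ _ h =>
    obtain ⟨l₁, l₂, a, b, rfl, rfl⟩ := h
    simp [mul_assoc]
  | refl => rfl
  | symm _ _ _ ih => exact ih.symm
  | trans _ _ _ _ _ ih₁ ih₂ => exact ih₁.trans ih₂

theorem braidEquiv_inv_pair_comm (a : G) : BraidEquiv [a⁻¹, a] [a, a⁻¹] :=
  BraidMove.braidEquiv ⟨[], [], a⁻¹, a, rfl, by simp⟩

theorem braidEquiv_cons_map_conj (a : G) (l : List G) :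
    BraidEquiv (a :: l) (l.map (fun x => a * x * a⁻¹) ++ [a]) := by
  induction l with
  | nil => exact .refl _
  | cons x l ih =>
    have move : BraidMove (a :: x :: l) ((a * x * a⁻¹) :: a :: l) := ⟨[], l, a, x, rfl, rfl⟩
    exact move.braidEquiv.trans (ih.cons _)

theorem braidEquiv_append_map_conj (a : G) (l : List G) :
    BraidEquiv (l ++ [a]) (a :: l.map (fun x => a⁻¹ * x * a)) := by
  refine (BraidEquiv.of_eq ?_).trans (braidEquiv_cons_map_conj a _).symm
  simp [Function.comp_def, mul_assoc]

theorem braidEquiv_append_map_conj_prod (l m : List G) :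
    BraidEquiv (l ++ m) ((m ++ l).map (fun x => l.prod * x * l.prod⁻¹)) := by
  induction l generalizing m with
  | nil => simp [BraidEquiv.refl]
  | cons a l ih =>
    calc BraidEquiv (a :: (l ++ m)) ((l ++ (m ++ [a])).map (fun x => a * x * a⁻¹)) := by
          simpa using braidEquiv_cons_map_conj a (l ++ m)
      BraidEquiv _
          (((m ++ [a] ++ l).map (fun x => l.prod * x * l.prod⁻¹)).map (fun x => a * x * a⁻¹)) :=
          (ih (m ++ [a])).map_conj a
      _ = (m ++ a :: l).map (fun x => (a :: l).prod * x * (a :: l).prod⁻¹) := by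
          simp [Function.comp_def, mul_assoc]

theorem braidEquiv_map_conj_prod (l : List G) :
    BraidEquiv l (l.map (fun x => l.prod * x * l.prod⁻¹)) := by
  simpa using braidEquiv_append_map_conj_prod l []

end BraidEquiv

section BraidConjugators

variable {G : Type*} [Group G] {l m : List G}

def braidConjugators (l : List G) : Subgroup G where
  carrier := {c | BraidEquiv l (l.map (fun x => c * x * c⁻¹))}
  one_mem' := by simp [BraidEquiv.refl]
  mul_mem' {c d} hc hd := by
    refine hc.trans (BraidEquiv.trans (hd.map_conj c) (.of_eq ?_))
    simp [Function.comp_def, mul_assoc]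
  inv_mem' {c} hc := by
    refine BraidEquiv.symm ((hc.map_conj c⁻¹).trans (.of_eq ?_))
    simp [Function.comp_def, mul_assoc]

theorem mem_braidConjugators {c : G} :
    c ∈ braidConjugators l ↔ BraidEquiv l (l.map (fun x => c * x * c⁻¹)) := Iff.rfl

theorem BraidEquiv.braidConjugators_eq (h : BraidEquiv l m) :
    braidConjugators l = braidConjugators m := by
  ext c
  simp only [mem_braidConjugators]
  exact ⟨fun hl => h.symm.trans (hl.trans (h.map_conj c)),
    fun hm => h.trans (hm.trans (h.map_conj c).symm)⟩

theorem head_mem_braidConjugators {a : G} {t : List G} (hprod : (a :: t).prod = 1) :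
    a ∈ braidConjugators (a :: t) := by
  have ht : t.prod = a⁻¹ := eq_inv_of_mul_eq_one_right (by simpa using hprod)
  have twist : BraidEquiv (t.map (fun x => a * x * a⁻¹)) t := by
    simpa [ht, Function.comp_def, mul_assoc] using (braidEquiv_map_conj_prod t).map_conj a
  simpa [mem_braidConjugators] using twist.symm.cons a

theorem mem_braidConjugators_of_mem {a : G} (hprod : l.prod = 1) (ha : a ∈ l) :
    a ∈ braidConjugators l := by
  obtain ⟨l₁, l₂, rfl⟩ := List.append_of_mem ha
  have move : BraidEquiv (l₁ ++ a :: l₂) (a :: (l₁.map (fun x => a⁻¹ * x * a) ++ l₂)) := by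
    simpa using (braidEquiv_append_map_conj a l₁).append (.refl l₂)
  rw [move.braidConjugators_eq]
  exact head_mem_braidConjugators (move.prod_eq ▸ hprod)

theorem closure_le_braidConjugators (hprod : l.prod = 1) :
    Subgroup.closure {x | x ∈ l} ≤ braidConjugators l :=
  (Subgroup.closure_le _).mpr fun _ => mem_braidConjugators_of_mem hprod

theorem mem_braidConjugators_replicate_pair_append {a c : G} (u : ℕ) {X : List G}
    (ha : c * a * c⁻¹ = a⁻¹) (hX : ∀ x ∈ X, c * x * c⁻¹ = x) :
    c ∈ braidConjugators ((List.replicate u [a, a⁻¹]).flatten ++ X) := by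
  have ha' : c * a⁻¹ * c⁻¹ = a := by simpa [mul_assoc] using congrArg (·⁻¹) ha
  have hconj : ((List.replicate u [a, a⁻¹]).flatten ++ X).map (fun x => c * x * c⁻¹) =
      (List.replicate u [a⁻¹, a]).flatten ++ X := by
    simp only [List.map_append, List.map_flatten, List.map_replicate, List.map_cons, List.map_nil,
      ha, ha', (List.map_congr_left hX).trans (List.map_id X)]
  rw [mem_braidConjugators, hconj]
  exact ((braidEquiv_inv_pair_comm a).flatten_replicate u).symm.append (.refl X)

end BraidConjugators

namespace Equiv.Perm

variable {α : Type*} [Fintype α] [DecidableEq α]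

theorem IsThreeCycle.swap_apply_mul_mul_swap_apply {h : Perm α} (hh : IsThreeCycle h) {a : α}
    (ha : a ∈ h.support) : swap a (h a) * h * swap a (h a) = h⁻¹ := by
  have e := hh.eq_swap_mul_swap_iff_mem_support.mpr ha
  generalize h a = b at e ⊢
  rw [e]
  simp

theorem IsThreeCycle.swap_mul_mul_swap {h : Perm α} (hh : IsThreeCycle h) {j k : α} (hjk : j ≠ k)
    (hj : j ∈ h.support) (hk : k ∈ h.support) : swap j k * h * swap j k = h⁻¹ := by
  have hk' : k ∈ ({j, h j, h (h j)} : Finset α) := hh.support_eq_iff_mem_support.mpr hj ▸ hk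
  simp only [Finset.mem_insert, Finset.mem_singleton] at hk'
  rcases hk' with rfl | rfl | rfl
  · exact absurd rfl hjk
  · exact hh.swap_apply_mul_mul_swap_apply hj
  · have hhk : h (h (h j)) = j := by
      simpa [pow_succ] using congrArg (· j) (hh.orderOf ▸ pow_orderOf_eq_one h : h ^ 3 = 1)
    simpa [swap_comm, hhk] using hh.swap_apply_mul_mul_swap_apply hk

theorem swap_mul_mul_swap_of_notMem_support {σ : Perm α} {j k : α} (hj : j ∉ σ.support)
    (hk : k ∉ σ.support) : swap j k * σ * swap j k = σ := by
  rw [mul_assoc, mul_swap_eq_swap_mul, notMem_support.mp hj, notMem_support.mp hk,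
    swap_mul_self_mul]

theorem eq_top_of_alternatingGroup_le {H : Subgroup (Perm α)} (hA : alternatingGroup α ≤ H)
    {τ : Perm α} (hτ : sign τ = -1) (hτH : τ ∈ H) : H = ⊤ := by
  refine eq_top_iff.mpr fun γ _ => ?_
  rcases Int.units_eq_one_or (sign γ) with hγ | hγ
  · exact hA (mem_alternatingGroup.mpr hγ)
  · have hγτ : γ * τ ∈ H := hA (mem_alternatingGroup.mpr (by simp [hγ, hτ]))
    simpa using H.mul_mem hγτ (H.inv_mem hτH)

end Equiv.Perm

open Equiv Equiv.Perm

theorem sn_conjugation_lemma_general (n r u : ℕ)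
    (h : Equiv.Perm (Fin n)) (hh : h.IsThreeCycle)
    (j k : Fin n) (hjk : j ≠ k) (hjs : j ∈ h.support) (hks : k ∈ h.support)
    (g' : List (Equiv.Perm (Fin n)))
    (havoid : ∀ σ ∈ g', j ∉ σ.support ∧ k ∉ σ.support)
    (hg : NielsenA n r ((List.replicate u [h, h⁻¹]).flatten ++ g')) :
    ∀ γ : Equiv.Perm (Fin n),
      BraidEquiv ((List.replicate u [h, h⁻¹]).flatten ++ g')
        (((List.replicate u [h, h⁻¹]).flatten ++ g').map (fun x => γ * x * γ⁻¹)) := by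
  obtain ⟨-, -, hprod, hgen⟩ := hg
  have hswap : swap j k ∈ braidConjugators ((List.replicate u [h, h⁻¹]).flatten ++ g') := by
    refine mem_braidConjugators_replicate_pair_append u ?_ fun σ hσ => ?_
    · rw [swap_inv]
      exact hh.swap_mul_mul_swap hjk hjs hks
    · rw [swap_inv]
      exact swap_mul_mul_swap_of_notMem_support (havoid σ hσ).1 (havoid σ hσ).2
  have hA : alternatingGroup (Fin n) ≤ braidConjugators _ :=
    hgen ▸ closure_le_braidConjugators hprod
  intro γ
  rw [← mem_braidConjugators, eq_top_of_alternatingGroup_le hA (sign_swap hjk) hswap]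
  exact Subgroup.mem_top γ

/-- **Sₙ-Conjugation Lemma.** Let `n ≥ 5` and suppose `g ∈ ni(A_n, C_{3^r})` has the
form `((h, h⁻¹)` repeated `u` times`, g')`, where `h` is a 3-cycle and two distinct
points `j, k` of the support of `h` lie outside the support of every entry of `g'`.
Then for every `γ ∈ S_n`, `g` is braid equivalent to its entrywise conjugate by `γ`. -/
theorem sn_conjugation_lemma (n r u : ℕ) (hn : 5 ≤ n) (hu : 1 ≤ u)
    (h : Equiv.Perm (Fin n)) (hh : h.IsThreeCycle)
    (j k : Fin n) (hjk : j ≠ k) (hjs : j ∈ h.support) (hks : k ∈ h.support)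
    (g' : List (Equiv.Perm (Fin n)))
    (havoid : ∀ σ ∈ g', j ∉ σ.support ∧ k ∉ σ.support)
    (hg : NielsenA n r ((List.replicate u [h, h⁻¹]).flatten ++ g')) :
    ∀ γ : Equiv.Perm (Fin n),
      BraidEquiv ((List.replicate u [h, h⁻¹]).flatten ++ g')
        (((List.replicate u [h, h⁻¹]).flatten ++ g').map (fun x => γ * x * γ⁻¹)) :=
  sn_conjugation_lemma_general n r u h hh j k hjk hjs hks g' havoid hg
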